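/- arXiv:1512.00256 — 5 statements merged into one kernel-verified Lean document; each statement's English description precedes it below -/
import Mathlib

section
/- Let n ≥ 2 and let T be a real symmetric n×n matrix with tr T = 0. Then |tr(T³)| ≤ ((n−2)/√(n(n−1))) · ‖T‖³. -/
/-!
Diagonalise `T`: its eigenvalues `λᵢ` satisfy `∑ λᵢ = 0`, `∑ λᵢ² = ‖T‖²` and `∑ λᵢ³ = tr T³`,
so the claim is an inequality for a vector of `n` reals with zero sum. Put
`t = ‖T‖ / √(n(n-1))`. Cauchy–Schwarz applied to `λᵢ = -∑_{j ≠ i} λⱼ` gives `λᵢ ≤ (n-1)t`, and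
then `(λᵢ + t)²((n-1)t - λᵢ) ≥ 0` bounds `λᵢ³` by a quadratic in `λᵢ`; summing it, only
`∑ λᵢ = 0` and `∑ λᵢ² = n(n-1)t²` enter, and the bound is `(n-2)t‖T‖²`. Equality holds at
`λ = ((n-1)t, -t, …, -t)`. Applying this to `-T` bounds `-tr T³`.
-/

open Finset

section SumOfCubes

variable {ι : Type*} [Fintype ι] {l : ι → ℝ}

theorem card_mul_sq_le_of_sum_eq_zero (h0 : ∑ i, l i = 0) (i : ι) :
    Fintype.card ι * l i ^ 2 ≤ (Fintype.card ι - 1) * ∑ j, l j ^ 2 := by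
  classical
  have hi : i ∈ (univ : Finset ι) := mem_univ i
  have hsum : ∑ j ∈ univ.erase i, l j = -l i := by
    rw [sum_erase_eq_sub hi, h0, zero_sub]
  have hsq : ∑ j ∈ univ.erase i, l j ^ 2 = ∑ j, l j ^ 2 - l i ^ 2 := sum_erase_eq_sub hi
  have hcs := sq_sum_le_card_mul_sum_sq (s := univ.erase i) (f := l)
  rw [hsum, hsq, cast_card_erase_of_mem hi, card_univ] at hcs
  linarith

theorem sum_pow_three_le_of_sum_eq_zero (h0 : ∑ i, l i = 0) :
    ∑ i, l i ^ 3 ≤ ((Fintype.card ι : ℝ) - 2) /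
      √((Fintype.card ι : ℝ) * (Fintype.card ι - 1)) * √(∑ i, l i ^ 2) ^ 3 := by
  have hsq := card_mul_sq_le_of_sum_eq_zero h0
  set n : ℝ := (Fintype.card ι : ℝ)
  set S := ∑ i, l i ^ 2
  have hS : 0 ≤ S := by positivity
  rcases le_or_gt n 1 with hn | hn
  · have hl : ∀ i, l i = 0 := fun i => by
      have : 1 ≤ n := Nat.one_le_cast.2 (Fintype.card_pos_iff.2 ⟨i⟩)
      nlinarith [hsq i, sq_nonneg (l i)]
    simp [S, hl]
  set t := √S / √(n * (n - 1))
  have ht : 0 ≤ t := by positivity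
  have hnn : 0 < n * (n - 1) := by nlinarith
  have ht2 : n * (n - 1) * t ^ 2 = S := by
    rw [div_pow, Real.sq_sqrt hS, Real.sq_sqrt hnn.le]; field_simp
  have hbd : ∀ i, l i ≤ (n - 1) * t := fun i => by
    refine le_of_sq_le_sq ?_ (by nlinarith)
    nlinarith [hsq i]
  have hcube : ∀ i, l i ^ 3 ≤ (n - 3) * t * l i ^ 2 + (2 * n - 3) * t ^ 2 * l i + (n - 1) * t ^ 3 :=
    fun i => by linear_combination mul_nonneg (sq_nonneg (l i + t)) (sub_nonneg.2 (hbd i))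
  calc ∑ i, l i ^ 3
      ≤ ∑ i, ((n - 3) * t * l i ^ 2 + (2 * n - 3) * t ^ 2 * l i + (n - 1) * t ^ 3) :=
        sum_le_sum fun i _ => hcube i
    _ = (n - 3) * t * S + n * (n - 1) * t ^ 3 := by
        rw [sum_add_distrib, sum_add_distrib, ← mul_sum, ← mul_sum, h0, sum_const, card_univ,
          nsmul_eq_mul]
        ring
    _ = (n - 2) * t * √S ^ 2 := by rw [Real.sq_sqrt hS]; linear_combination t * ht2
    _ = (n - 2) / √(n * (n - 1)) * √S ^ 3 := by ring

theorem abs_sum_pow_three_le_of_sum_eq_zero (h0 : ∑ i, l i = 0) :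
    |∑ i, l i ^ 3| ≤ ((Fintype.card ι : ℝ) - 2) /
      √((Fintype.card ι : ℝ) * (Fintype.card ι - 1)) * √(∑ i, l i ^ 2) ^ 3 := by
  have hneg := sum_pow_three_le_of_sum_eq_zero (l := -l) (by simp [h0])
  simp only [Pi.neg_apply, neg_pow_two, Odd.neg_pow (by decide : Odd 3), sum_neg_distrib] at hneg
  exact abs_le.2 ⟨by linarith, sum_pow_three_le_of_sum_eq_zero h0⟩

end SumOfCubes

namespace Matrix

theorem IsHermitian.trace_pow_eq_sum_eigenvalues_pow {n 𝕜 : Type*} [Fintype n] [DecidableEq n]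
    [RCLike 𝕜] {A : Matrix n n 𝕜} (hA : A.IsHermitian) (k : ℕ) :
    (A ^ k).trace = ∑ i, (hA.eigenvalues i : 𝕜) ^ k := by
  conv_lhs => rw [hA.spectral_theorem, ← map_pow, Unitary.conjStarAlgAut_apply, trace_mul_cycle,
    Unitary.coe_star_mul_self, one_mul, diagonal_pow, trace_diagonal]
  simp

theorem trace_mul_transpose_self {m n R : Type*} [Fintype m] [Fintype n] [Semiring R]
    (A : Matrix m n R) : (A * Aᵀ).trace = ∑ i, ∑ j, A i j ^ 2 := by
  simp [trace, mul_apply, sq]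

end Matrix

theorem stmt_0_general (n : ℕ) (T : Matrix (Fin n) (Fin n) ℝ)
    (hsymm : T.IsSymm) (htr : T.trace = 0) :
    |(T ^ 3).trace| ≤
      ((n : ℝ) - 2) / Real.sqrt ((n : ℝ) * ((n : ℝ) - 1)) *
        (Real.sqrt (∑ i, ∑ j, (T i j) ^ 2)) ^ 3 := by
  have hT : T.IsHermitian := hsymm
  have hfrob : ∑ i, ∑ j, T i j ^ 2 = (T ^ 2).trace := by
    rw [← Matrix.trace_mul_transpose_self, hsymm.eq, sq]
  rw [hfrob, hT.trace_pow_eq_sum_eigenvalues_pow, hT.trace_pow_eq_sum_eigenvalues_pow]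
  simpa using abs_sum_pow_three_le_of_sum_eq_zero (l := hT.eigenvalues) <| by
    simpa [hT.trace_eq_sum_eigenvalues] using htr

/-- Huisken's inequality for trace-free symmetric matrices:
`|tr(T³)| ≤ ((n−2)/√(n(n−1))) ‖T‖³` with `‖T‖` the Frobenius norm. -/
theorem stmt_0 (n : ℕ) (hn : 2 ≤ n) (T : Matrix (Fin n) (Fin n) ℝ)
    (hsymm : T.IsSymm) (htr : T.trace = 0) :
    |(T ^ 3).trace| ≤
      ((n : ℝ) - 2) / Real.sqrt ((n : ℝ) * ((n : ℝ) - 1)) *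
        (Real.sqrt (∑ i, ∑ j, (T i j) ^ 2)) ^ 3 :=
  stmt_0_general n T hsymm htr
end

section
/- Let n ≥ 2, let R be any 4-tensor on ℝⁿ, and let B be a real symmetric trace-free n×n matrix. Then |Σ_{i,j,k,l,h} R_{ijkl} R_{ijkh} B_{hl}| ≤ √((n−1)/n) · ‖B‖ · ‖R‖². -/
/-!
For each fixed `i, j, k` the summand is the quadratic form `xᵀ B x` of `x = R_{ijk·}`. Since `B`
is trace-free, `xᵀ B x = ⟨B, x xᵀ - (|x|²/n) I⟩` (Frobenius pairing), and the trace-free part of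
`x xᵀ` has Frobenius norm exactly `√((n-1)/n) |x|²`; Cauchy–Schwarz bounds each quadratic form by
`√((n-1)/n) ‖B‖ |x|²`, and summing over `i, j, k` gives the claim.
-/

open Finset Matrix

section CauchySchwarz

variable {ι κ : Type*} [Fintype ι] [Fintype κ]

lemma abs_sum_mul_le_sqrt_mul_sqrt (f g : ι → ℝ) :
    |∑ i, f i * g i| ≤ √(∑ i, f i ^ 2) * √(∑ i, g i ^ 2) := by
  refine abs_le.2 ⟨?_, Real.sum_mul_le_sqrt_mul_sqrt _ f g⟩
  simpa [neg_le, ← sum_neg_distrib] using Real.sum_mul_le_sqrt_mul_sqrt univ (-f) g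

lemma abs_sum_sum_mul_le_sqrt_mul_sqrt (f g : ι → κ → ℝ) :
    |∑ i, ∑ j, f i j * g i j| ≤ √(∑ i, ∑ j, f i j ^ 2) * √(∑ i, ∑ j, g i j ^ 2) := by
  simpa only [← Fintype.sum_prod_type'] using
    abs_sum_mul_le_sqrt_mul_sqrt (fun p : ι × κ ↦ f p.1 p.2) (fun p ↦ g p.1 p.2)

end CauchySchwarz

section TraceFree

variable {ι : Type*} [Fintype ι] [DecidableEq ι]

noncomputable def traceFreeOuter (x : ι → ℝ) : Matrix ι ι ℝ :=
  vecMulVec x x - ((∑ i, x i ^ 2) / Fintype.card ι) • 1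

lemma traceFreeOuter_apply (x : ι → ℝ) (i j : ι) :
    traceFreeOuter x i j =
      x i * x j - if i = j then (∑ i, x i ^ 2) / Fintype.card ι else 0 := by
  simp [traceFreeOuter, vecMulVec_apply, one_apply]

lemma sum_sum_mul_traceFreeOuter {B : Matrix ι ι ℝ} (hB : B.trace = 0) (x : ι → ℝ) :
    ∑ h, ∑ l, B h l * traceFreeOuter x l h = ∑ l, ∑ h, x l * x h * B h l := by
  generalize hc : (∑ i, x i ^ 2) / (Fintype.card ι : ℝ) = c
  have : ∑ h, ∑ l, B h l * traceFreeOuter x l h =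
      ∑ h, ∑ l, x l * x h * B h l - c * B.trace := by
    simp only [traceFreeOuter_apply, hc, mul_sub, mul_ite, mul_zero, sum_sub_distrib,
      sum_ite_eq', mem_univ, if_true, Matrix.trace, Matrix.diag, mul_sum]
    congr 1 <;> refine sum_congr rfl fun _ _ ↦ ?_
    · exact sum_congr rfl fun _ _ ↦ by ring
    · ring
  rw [this, hB, mul_zero, sub_zero, sum_comm]

lemma sum_sum_traceFreeOuter_sq (x : ι → ℝ) :
    ∑ i, ∑ j, traceFreeOuter x i j ^ 2 =
      (Fintype.card ι - 1) / Fintype.card ι * (∑ i, x i ^ 2) ^ 2 := by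
  generalize hS : ∑ i, x i ^ 2 = S
  generalize hn : (Fintype.card ι : ℝ) = n
  have expand :
      ∑ i, ∑ j, traceFreeOuter x i j ^ 2 = S ^ 2 - 2 * (S / n) * S + n * (S / n) ^ 2 := by
    have (i j : ι) : traceFreeOuter x i j ^ 2 =
        x i ^ 2 * x j ^ 2 - if i = j then 2 * (S / n) * x i ^ 2 - (S / n) ^ 2 else 0 := by
      rw [traceFreeOuter_apply, hS, hn]
      split_ifs with h <;> [subst h; skip] <;> ring
    simp only [this, sum_sub_distrib, sum_ite_eq, mem_univ, if_true, ← mul_sum, ← sum_mul, hS,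
      sum_const, card_univ, nsmul_eq_mul, hn]
    ring
  rcases isEmpty_or_nonempty ι with hι | hι
  · simp [← hS]
  · have : n ≠ 0 := by rw [← hn]; positivity
    rw [expand]
    field_simp
    ring

theorem abs_sum_sum_mul_mul_le_of_trace_eq_zero {B : Matrix ι ι ℝ} (hB : B.trace = 0)
    (x : ι → ℝ) :
    |∑ l, ∑ h, x l * x h * B h l| ≤
      √((Fintype.card ι - 1) / Fintype.card ι) * √(∑ i, ∑ j, B i j ^ 2) * ∑ i, x i ^ 2 := by
  rw [← sum_sum_mul_traceFreeOuter hB]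
  calc _ ≤ √(∑ h, ∑ l, B h l ^ 2) * √(∑ h, ∑ l, traceFreeOuter x l h ^ 2) :=
        abs_sum_sum_mul_le_sqrt_mul_sqrt _ _
    _ = _ := by
      rw [sum_comm (f := fun h l ↦ traceFreeOuter x l h ^ 2), sum_sum_traceFreeOuter_sq,
        Real.sqrt_mul' _ (sq_nonneg _), Real.sqrt_sq (sum_nonneg fun i _ ↦ sq_nonneg (x i))]
      ring

end TraceFree

theorem stmt_3_general (n : ℕ)
    (R : Fin n → Fin n → Fin n → Fin n → ℝ)
    (B : Matrix (Fin n) (Fin n) ℝ) (htr : B.trace = 0) :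
    |∑ i, ∑ j, ∑ k, ∑ l, ∑ h, R i j k l * R i j k h * B h l| ≤
      Real.sqrt (((n : ℝ) - 1) / (n : ℝ)) *
        Real.sqrt (∑ i, ∑ j, (B i j) ^ 2) *
        (∑ i, ∑ j, ∑ k, ∑ l, (R i j k l) ^ 2) := by
  set C := √(((n : ℝ) - 1) / n) * √(∑ i, ∑ j, B i j ^ 2)
  have hquad (x : Fin n → ℝ) : |∑ l, ∑ h, x l * x h * B h l| ≤ C * ∑ l, x l ^ 2 := by
    simpa only [Fintype.card_fin] using abs_sum_sum_mul_mul_le_of_trace_eq_zero htr x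
  calc _ ≤ ∑ i, ∑ j, ∑ k, |∑ l, ∑ h, R i j k l * R i j k h * B h l| :=
        (abs_sum_le_sum_abs _ _).trans <| sum_le_sum fun i _ ↦ (abs_sum_le_sum_abs _ _).trans <|
          sum_le_sum fun j _ ↦ abs_sum_le_sum_abs _ _
    _ ≤ ∑ i, ∑ j, ∑ k, C * ∑ l, R i j k l ^ 2 := by
      gcongr
      exact hquad _
    _ = C * ∑ i, ∑ j, ∑ k, ∑ l, R i j k l ^ 2 := by simp only [mul_sum]

/-- For any 4-tensor `R` on `ℝⁿ` and any symmetric trace-free matrix `B`: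
`|Σ R_{ijkl} R_{ijkh} B_{hl}| ≤ √((n−1)/n) ‖B‖ ‖R‖²`. -/
theorem stmt_3 (n : ℕ) (hn : 2 ≤ n)
    (R : Fin n → Fin n → Fin n → Fin n → ℝ)
    (B : Matrix (Fin n) (Fin n) ℝ) (hB : B.IsSymm) (htr : B.trace = 0) :
    |∑ i, ∑ j, ∑ k, ∑ l, ∑ h, R i j k l * R i j k h * B h l| ≤
      Real.sqrt (((n : ℝ) - 1) / (n : ℝ)) *
        Real.sqrt (∑ i, ∑ j, (B i j) ^ 2) *
        (∑ i, ∑ j, ∑ k, ∑ l, (R i j k l) ^ 2) :=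
  stmt_3_general n R B htr
end

section
/- Let n ≥ 3, let W be a 4-tensor on ℝⁿ with curvature symmetries, satisfying the first Bianchi identity, and totally trace-free, and let B be a real symmetric trace-free n×n matrix. Then |Σ_{i,j,k,l} W_{kijl} B_{ij} B_{kl}| ≤ √((n−2)/(2(n−1))) · ‖W‖ · ‖B‖². -/
/-!
Write `X ⊙ Y` for the Kulkarni–Nomizu product. Pairing the Bianchi identity with `B ⊗ B` gives
`⟨W, B ⊙ B⟩ = -4 W_{kijl} B_{ij} B_{kl}`. A tensor with the symmetries of `W` and vanishing Ricci
contraction is orthogonal to every `A ⊙ 1`, so `B ⊙ B` may be replaced by its Weyl part `Z`, and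
Cauchy–Schwarz gives `16 (W_{kijl} B_{ij} B_{kl})² ≤ ‖W‖² ‖Z‖²`. Finally
`‖Z‖² = ‖B ⊙ B‖² - 4/(n-2) (‖Ric‖² - (tr Ric)²/(2(n-1)))` with `Ric = -2 B²`, and the bound
`(tr B²)² ≤ n ‖B²‖²` turns this into `‖Z‖² ≤ 8 (n-2)/(n-1) ‖B‖⁴`.
-/

open Finset

theorem Matrix.sq_trace_le_card_mul_sum_sq {ι R : Type*} [Fintype ι] [CommRing R] [LinearOrder R]
    [IsStrictOrderedRing R] (A : Matrix ι ι R) :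
    A.trace ^ 2 ≤ Fintype.card ι * ∑ i, ∑ j, A i j ^ 2 :=
  calc A.trace ^ 2 ≤ Fintype.card ι * ∑ i, A i i ^ 2 := sq_sum_le_card_mul_sum_sq
    _ ≤ Fintype.card ι * ∑ i, ∑ j, A i j ^ 2 := by
      gcongr with i
      exact single_le_sum (f := fun j => A i j ^ 2) (fun _ _ => sq_nonneg _) (mem_univ i)

theorem Matrix.IsSymm.trace_mul_self {ι R : Type*} [Fintype ι] [CommRing R] {B : Matrix ι ι R}
    (hB : B.IsSymm) : (B * B).trace = ∑ i, ∑ j, B i j ^ 2 := by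
  simp only [Matrix.trace, Matrix.diag, Matrix.mul_apply, sq, hB.apply]

abbrev Tensor4 (ι R : Type*) := ι → ι → ι → ι → R

namespace Tensor4

variable {ι R : Type*}

section CommRing

variable [CommRing R]

def SkewInPairs (X : Tensor4 ι R) : Prop :=
  (∀ i j k l, X i j k l = -X j i k l) ∧ ∀ i j k l, X i j k l = -X i j l k

def kulkarniNomizu (A B : Matrix ι ι R) : Tensor4 ι R := fun i j k l =>
  A i k * B j l + A j l * B i k - A i l * B j k - A j k * B i l

theorem SkewInPairs.sub {X Y : Tensor4 ι R} (hX : SkewInPairs X) (hY : SkewInPairs Y) :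
    SkewInPairs (X - Y) :=
  ⟨fun i j k l => by simp only [Pi.sub_apply, hX.1 i j k l, hY.1 i j k l]; ring,
    fun i j k l => by simp only [Pi.sub_apply, hX.2 i j k l, hY.2 i j k l]; ring⟩

theorem skewInPairs_kulkarniNomizu (A B : Matrix ι ι R) : SkewInPairs (kulkarniNomizu A B) :=
  ⟨fun _ _ _ _ => by simp only [kulkarniNomizu]; ring,
    fun _ _ _ _ => by simp only [kulkarniNomizu]; ring⟩

variable [Fintype ι]

def dot (X Y : Tensor4 ι R) : R := ∑ i, ∑ j, ∑ k, ∑ l, X i j k l * Y i j k l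

def ricci (X : Tensor4 ι R) : Matrix ι ι R := Matrix.of fun j l => ∑ i, X i j i l

theorem dot_comm (X Y : Tensor4 ι R) : dot X Y = dot Y X := by
  simp only [dot, mul_comm]

theorem dot_sub_right (X Y Z : Tensor4 ι R) : dot X (Y - Z) = dot X Y - dot X Z := by
  simp only [dot, Pi.sub_apply, mul_sub, sum_sub_distrib]

theorem ricci_sub (X Y : Tensor4 ι R) : ricci (X - Y) = ricci X - ricci Y := by
  ext j l
  simp [ricci, sum_sub_distrib]

theorem ricci_kulkarniNomizu (A B : Matrix ι ι R) :
    ricci (kulkarniNomizu A B) = A.trace • B + B.trace • A - B * A - A * B := by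
  ext j l
  simp only [ricci, kulkarniNomizu, sum_sub_distrib, sum_add_distrib, Matrix.of_apply, Matrix.trace,
    Matrix.diag_apply, Matrix.sub_apply, Matrix.add_apply, Matrix.smul_apply, smul_eq_mul, mul_comm,
    Matrix.mul_apply, sub_left_inj]
  rw [← sum_mul, ← mul_sum]
  ring

theorem dot_kulkarniNomizu {X : Tensor4 ι R} (hX : SkewInPairs X) (A B : Matrix ι ι R) :
    dot X (kulkarniNomizu A B) = 4 * ∑ i, ∑ j, ∑ k, ∑ l, X i j k l * A i k * B j l := by
  have swap_pairs : ∑ i, ∑ j, ∑ k, ∑ l, X i j k l * A j l * B i k =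
      ∑ i, ∑ j, ∑ k, ∑ l, X i j k l * A i k * B j l := by
    rw [sum_comm]
    refine sum_congr rfl fun j _ => sum_congr rfl fun i _ => ?_
    rw [sum_comm]
    refine sum_congr rfl fun l _ => sum_congr rfl fun k _ => ?_
    rw [hX.1, hX.2]
    ring
  have swap_first : ∑ i, ∑ j, ∑ k, ∑ l, X i j k l * A j k * B i l =
      -∑ i, ∑ j, ∑ k, ∑ l, X i j k l * A i k * B j l := by
    rw [sum_comm]
    simp only [← sum_neg_distrib]
    refine sum_congr rfl fun j _ => sum_congr rfl fun i _ => sum_congr rfl fun k _ =>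
      sum_congr rfl fun l _ => ?_
    rw [hX.1]
    ring
  have swap_second : ∑ i, ∑ j, ∑ k, ∑ l, X i j k l * A i l * B j k =
      -∑ i, ∑ j, ∑ k, ∑ l, X i j k l * A i k * B j l := by
    simp only [← sum_neg_distrib]
    refine sum_congr rfl fun i _ => sum_congr rfl fun j _ => ?_
    rw [sum_comm]
    refine sum_congr rfl fun l _ => sum_congr rfl fun k _ => ?_
    rw [hX.2]
    ring
  simp only [dot, kulkarniNomizu, mul_add, mul_sub, sum_add_distrib, sum_sub_distrib,
    ← mul_assoc]
  rw [swap_pairs, swap_first, swap_second]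
  ring

theorem ricci_kulkarniNomizu_self {B : Matrix ι ι R} (hB : B.trace = 0) :
    ricci (kulkarniNomizu B B) = (-2 : R) • (B * B) := by
  rw [ricci_kulkarniNomizu, hB, zero_smul, zero_add, sub_sub, ← two_smul R (B * B), neg_smul,
    zero_sub]

theorem dot_kulkarniNomizu_self {B : Matrix ι ι R} (hB : B.IsSymm) :
    dot (kulkarniNomizu B B) (kulkarniNomizu B B) =
      8 * ((∑ i, ∑ j, B i j ^ 2) ^ 2 - ∑ i, ∑ j, (B * B) i j ^ 2) := by
  have h_sq : ∑ i, ∑ j, ∑ k, ∑ l, B i k ^ 2 * B j l ^ 2 = (∑ i, ∑ j, B i j ^ 2) ^ 2 := by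
    rw [sq, sum_mul_sum]
    exact sum_congr rfl fun i _ => sum_congr rfl fun j _ => (sum_mul_sum ..).symm
  have h_cross : ∑ i, ∑ j, ∑ k, ∑ l, B i k * B j l * B i l * B j k =
      ∑ i, ∑ j, (B * B) i j ^ 2 := by
    refine sum_congr rfl fun i _ => sum_congr rfl fun j _ => ?_
    rw [sq, Matrix.mul_apply, sum_mul_sum]
    exact sum_congr rfl fun k _ => sum_congr rfl fun l _ => by
      rw [hB.apply k j, hB.apply l j]
      ring
  have h_expand : ∀ i j k l, kulkarniNomizu B B i j k l * B i k * B j l =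
      (B i k ^ 2 * B j l ^ 2 - B i k * B j l * B i l * B j k) * 2 := by
    intro i j k l
    simp only [kulkarniNomizu]
    ring
  rw [dot_kulkarniNomizu (skewInPairs_kulkarniNomizu B B), ← h_sq, ← h_cross]
  simp only [h_expand, ← sum_mul, sum_sub_distrib]
  ring

/-- Pair the Bianchi identity with `B i l * B j k`: the first term gives the right-hand side, the
second the left-hand side, and the third vanishes (`X` is skew and `B` symmetric in `j, k`). -/
theorem sum_mul_mul_eq_neg_of_bianchi [IsAddTorsionFree R] {X : Tensor4 ι R}
    (hX : ∀ i j k l, X i j k l = -X i j l k)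
    (hbianchi : ∀ i j k l, X i j k l + X i k l j + X i l j k = 0)
    {B : Matrix ι ι R} (hB : B.IsSymm) :
    ∑ i, ∑ j, ∑ k, ∑ l, X i j k l * B i k * B j l =
      -∑ i, ∑ j, ∑ k, ∑ l, X k i j l * B i j * B k l := by
  have h_first : ∑ i, ∑ j, ∑ k, ∑ l, X k i j l * B i j * B k l =
      ∑ i, ∑ j, ∑ k, ∑ l, X i j k l * B i l * B j k := by
    conv_rhs => rw [sum_comm]
    refine sum_congr rfl fun i _ => ?_
    conv_rhs => rw [sum_comm]
    refine sum_congr rfl fun j _ => sum_congr rfl fun k _ => sum_congr rfl fun l _ => ?_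
    ring
  have h_second : ∑ i, ∑ j, ∑ k, ∑ l, X i k l j * B i l * B j k =
      ∑ i, ∑ j, ∑ k, ∑ l, X i j k l * B i k * B j l := by
    refine sum_congr rfl fun i _ => ?_
    rw [sum_comm]
    refine sum_congr rfl fun j _ => ?_
    rw [sum_comm]
    refine sum_congr rfl fun k _ => sum_congr rfl fun l _ => ?_
    rw [hB.apply j l]
  have h_third : ∑ i, ∑ j, ∑ k, ∑ l, X i l j k * B i l * B j k = 0 := by
    refine self_eq_neg.mp ?_
    simp only [← sum_neg_distrib]
    refine sum_congr rfl fun i _ => ?_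
    rw [sum_comm]
    refine sum_congr rfl fun k _ => sum_congr rfl fun j _ => sum_congr rfl fun l _ => ?_
    rw [hX i l j k, hB.apply j k]
    ring
  have h_sum : ∑ i, ∑ j, ∑ k, ∑ l, (X i j k l + X i k l j + X i l j k) * B i l * B j k = 0 := by
    simp [hbianchi]
  simp only [add_mul, sum_add_distrib, h_second, h_third, add_zero, ← h_first] at h_sum
  exact eq_neg_of_add_eq_zero_right h_sum

variable [DecidableEq ι]

theorem ricci_kulkarniNomizu_one (A : Matrix ι ι R) :
    ricci (kulkarniNomizu A 1) = A.trace • 1 + ((Fintype.card ι : R) - 2) • A := by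
  rw [ricci_kulkarniNomizu]
  simp only [Matrix.trace_one, Matrix.one_mul, Matrix.mul_one]
  module

theorem dot_kulkarniNomizu_one {X : Tensor4 ι R} (hX : SkewInPairs X) (A : Matrix ι ι R) :
    dot X (kulkarniNomizu A 1) = 4 * ∑ j, ∑ l, ricci X j l * A j l := by
  rw [dot_kulkarniNomizu hX]
  simp only [Matrix.one_apply, mul_ite, mul_one, mul_zero, sum_ite_eq, mem_univ, if_true, ricci,
    Matrix.of_apply, sum_mul]
  congr 1
  refine sum_congr rfl fun i _ => ?_
  rw [sum_comm]
  refine sum_congr rfl fun k _ => sum_congr rfl fun j _ => ?_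
  rw [hX.1, hX.2, neg_neg]

end CommRing

section OrderedRing

variable [CommRing R] [LinearOrder R] [IsStrictOrderedRing R] [Fintype ι]

theorem dot_self_nonneg (X : Tensor4 ι R) : 0 ≤ dot X X :=
  sum_nonneg fun _ _ => sum_nonneg fun _ _ => sum_nonneg fun _ _ => sum_nonneg fun _ _ =>
    mul_self_nonneg _

theorem dot_sq_le_dot_self_mul_dot_self (X Y : Tensor4 ι R) :
    dot X Y ^ 2 ≤ dot X X * dot Y Y := by
  simpa only [dot, Fintype.sum_prod_type, sq] using
    sum_mul_sq_le_sq_mul_sq univ (fun p : ι × ι × ι × ι => X p.1 p.2.1 p.2.2.1 p.2.2.2)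
      (fun p => Y p.1 p.2.1 p.2.2.1 p.2.2.2)

end OrderedRing

section Field

variable [Field R] [Fintype ι] [DecidableEq ι]

def schouten (M : Matrix ι ι R) : Matrix ι ι R :=
  ((Fintype.card ι : R) - 2)⁻¹ • (M - (M.trace / (2 * ((Fintype.card ι : R) - 1))) • 1)

def weylPart (X : Tensor4 ι R) : Tensor4 ι R :=
  X - kulkarniNomizu (schouten (ricci X)) 1

theorem skewInPairs_weylPart {X : Tensor4 ι R} (hX : SkewInPairs X) : SkewInPairs (weylPart X) :=
  hX.sub (skewInPairs_kulkarniNomizu _ _)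

theorem dot_weylPart_of_ricci_eq_zero {W : Tensor4 ι R} (hW : SkewInPairs W) (hric : ricci W = 0)
    (X : Tensor4 ι R) : dot W (weylPart X) = dot W X := by
  simp [weylPart, dot_sub_right, dot_kulkarniNomizu_one hW, hric]

theorem sum_mul_schouten (M : Matrix ι ι R) :
    ∑ j, ∑ l, M j l * schouten M j l = ((Fintype.card ι : R) - 2)⁻¹ *
      (∑ j, ∑ l, M j l ^ 2 - M.trace ^ 2 / (2 * ((Fintype.card ι : R) - 1))) := by
  simp only [schouten, Matrix.smul_apply, Matrix.sub_apply, Matrix.one_apply, smul_eq_mul,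
    mul_sub, mul_ite, mul_one, mul_zero, sum_sub_distrib, sum_ite_eq, mem_univ, if_true,
    Matrix.trace, Matrix.diag, sq, mul_left_comm _ ((Fintype.card ι : R) - 2)⁻¹, ← mul_sum,
    ← sum_mul]
  ring

variable [CharZero R] (hι : 2 < Fintype.card ι)
include hι

theorem ricci_kulkarniNomizu_schouten (M : Matrix ι ι R) :
    ricci (kulkarniNomizu (schouten M) 1) = M := by
  have hN1 : (Fintype.card ι : R) - 1 ≠ 0 := sub_ne_zero.2 (by norm_cast; omega)
  have hN2 : (Fintype.card ι : R) - 2 ≠ 0 := sub_ne_zero.2 (by norm_cast; omega)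
  have htr : (schouten M).trace = M.trace / (2 * ((Fintype.card ι : R) - 1)) := by
    simp only [schouten, Matrix.trace_smul, Matrix.trace_sub, Matrix.trace_one, smul_eq_mul]
    field_simp
    ring
  rw [ricci_kulkarniNomizu_one, htr, schouten, smul_smul, mul_inv_cancel₀ hN2, one_smul]
  abel

theorem ricci_weylPart (X : Tensor4 ι R) : ricci (weylPart X) = 0 := by
  rw [weylPart, ricci_sub, ricci_kulkarniNomizu_schouten hι, sub_self]

theorem dot_weylPart_self {X : Tensor4 ι R} (hX : SkewInPairs X) :
    dot (weylPart X) (weylPart X) =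
      dot X X - 4 * ∑ j, ∑ l, ricci X j l * schouten (ricci X) j l :=
  calc dot (weylPart X) (weylPart X) = dot (weylPart X) X := by
        rw [dot_weylPart_of_ricci_eq_zero (skewInPairs_weylPart hX) (ricci_weylPart hι X)]
    _ = dot X X - 4 * ∑ j, ∑ l, ricci X j l * schouten (ricci X) j l := by
        rw [dot_comm, weylPart, dot_sub_right, dot_kulkarniNomizu_one hX]

end Field

theorem dot_weylPart_kulkarniNomizu_self_le [Field R] [LinearOrder R] [IsStrictOrderedRing R]
    [Fintype ι] [DecidableEq ι] (hι : 2 < Fintype.card ι) {B : Matrix ι ι R} (hB : B.IsSymm)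
    (htr : B.trace = 0) :
    dot (weylPart (kulkarniNomizu B B)) (weylPart (kulkarniNomizu B B)) ≤
      8 * (Fintype.card ι - 2) / (Fintype.card ι - 1) * (∑ i, ∑ j, B i j ^ 2) ^ 2 := by
  have hq := (B * B).sq_trace_le_card_mul_sum_sq
  have hN : (2 : R) < Fintype.card ι := by exact_mod_cast hι
  rw [dot_weylPart_self hι (skewInPairs_kulkarniNomizu B B), sum_mul_schouten,
    ricci_kulkarniNomizu_self htr, dot_kulkarniNomizu_self hB]
  simp only [Matrix.trace_smul, hB.trace_mul_self, Matrix.smul_apply, smul_eq_mul, mul_pow,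
    ← mul_sum] at hq ⊢
  generalize (Fintype.card ι : R) = N at hN hq ⊢
  generalize ∑ i, ∑ j, B i j ^ 2 = x at hq ⊢
  generalize ∑ i, ∑ j, (B * B) i j ^ 2 = q at hq ⊢
  have h_gap : 8 * (N - 2) / (N - 1) * x ^ 2 -
      (8 * (x ^ 2 - q) - 4 * ((N - 2)⁻¹ * ((-2) ^ 2 * q - (-2) ^ 2 * x ^ 2 / (2 * (N - 1))))) =
      8 * (N * q - x ^ 2) / (N - 2) := by
    have : N - 1 ≠ 0 := by linarith
    have : N - 2 ≠ 0 := by linarith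
    field_simp
    ring
  rw [← sub_nonneg, h_gap]
  exact div_nonneg (by linarith) (by linarith)

end Tensor4

open Tensor4 in
theorem stmt_4_general (n : ℕ) (hn : 3 ≤ n)
    (W : Fin n → Fin n → Fin n → Fin n → ℝ)
    (hanti1 : ∀ i j k l, W i j k l = -W j i k l)
    (hanti2 : ∀ i j k l, W i j k l = -W i j l k)
    (hbianchi : ∀ i j k l, W i j k l + W i k l j + W i l j k = 0)
    (htrfree : ∀ j l, ∑ i, W i j i l = 0)
    (B : Matrix (Fin n) (Fin n) ℝ) (hB : B.IsSymm) (htrB : B.trace = 0) :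
    |∑ i, ∑ j, ∑ k, ∑ l, W k i j l * B i j * B k l| ≤
      Real.sqrt (((n : ℝ) - 2) / (2 * ((n : ℝ) - 1))) *
        Real.sqrt (∑ i, ∑ j, ∑ k, ∑ l, (W i j k l) ^ 2) *
        (∑ i, ∑ j, (B i j) ^ 2) := by
  have hN : (3 : ℝ) ≤ n := by exact_mod_cast hn
  have hW : SkewInPairs W := ⟨hanti1, hanti2⟩
  have h_pair : dot W (weylPart (kulkarniNomizu B B)) =
      -4 * ∑ i, ∑ j, ∑ k, ∑ l, W k i j l * B i j * B k l := by
    rw [dot_weylPart_of_ricci_eq_zero hW (Matrix.ext htrfree), dot_kulkarniNomizu hW,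
      sum_mul_mul_eq_neg_of_bianchi hanti2 hbianchi hB]
    ring
  have h_norm := dot_weylPart_kulkarniNomizu_self_le (by rw [Fintype.card_fin]; omega) hB htrB
  rw [Fintype.card_fin] at h_norm
  have h_sq : (∑ i, ∑ j, ∑ k, ∑ l, W k i j l * B i j * B k l) ^ 2 ≤
      ((n : ℝ) - 2) / (2 * ((n : ℝ) - 1)) * dot W W * (∑ i, ∑ j, B i j ^ 2) ^ 2 := by
    have := calc
      16 * (∑ i, ∑ j, ∑ k, ∑ l, W k i j l * B i j * B k l) ^ 2
          = dot W (weylPart (kulkarniNomizu B B)) ^ 2 := by rw [h_pair]; ring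
      _ ≤ dot W W * dot (weylPart (kulkarniNomizu B B)) (weylPart (kulkarniNomizu B B)) :=
        dot_sq_le_dot_self_mul_dot_self _ _
      _ ≤ dot W W * (8 * (n - 2) / (n - 1) * (∑ i, ∑ j, B i j ^ 2) ^ 2) :=
        mul_le_mul_of_nonneg_left h_norm (dot_self_nonneg W)
      _ = 16 * (((n : ℝ) - 2) / (2 * ((n : ℝ) - 1)) * dot W W * (∑ i, ∑ j, B i j ^ 2) ^ 2) := by
        field_simp [show (n : ℝ) - 1 ≠ 0 by linarith]
        ring
    linarith
  have hWW : dot W W = ∑ i, ∑ j, ∑ k, ∑ l, W i j k l ^ 2 := by simp only [dot, sq]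
  rw [← hWW, ← Real.sqrt_sq (sum_nonneg fun i _ => sum_nonneg fun j _ => sq_nonneg (B i j)),
    ← Real.sqrt_mul (div_nonneg (by linarith) (by linarith)),
    ← Real.sqrt_mul (mul_nonneg (div_nonneg (by linarith) (by linarith)) (dot_self_nonneg W))]
  exact Real.abs_le_sqrt h_sq

/-- Huisken's estimate `|W_{kijl} B_{ij} B_{kl}| ≤ √((n−2)/(2(n−1))) ‖W‖ ‖B‖²`
for a Weyl-type tensor `W` and a symmetric trace-free matrix `B`. -/
theorem stmt_4 (n : ℕ) (hn : 3 ≤ n)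
    (W : Fin n → Fin n → Fin n → Fin n → ℝ)
    (hanti1 : ∀ i j k l, W i j k l = -W j i k l)
    (hanti2 : ∀ i j k l, W i j k l = -W i j l k)
    (hpair : ∀ i j k l, W i j k l = W k l i j)
    (hbianchi : ∀ i j k l, W i j k l + W i k l j + W i l j k = 0)
    (htrfree : ∀ j l, ∑ i, W i j i l = 0)
    (B : Matrix (Fin n) (Fin n) ℝ) (hB : B.IsSymm) (htrB : B.trace = 0) :
    |∑ i, ∑ j, ∑ k, ∑ l, W k i j l * B i j * B k l| ≤
      Real.sqrt (((n : ℝ) - 2) / (2 * ((n : ℝ) - 1))) *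
        Real.sqrt (∑ i, ∑ j, ∑ k, ∑ l, (W i j k l) ^ 2) *
        (∑ i, ∑ j, (B i j) ^ 2) :=
  stmt_4_general n hn W hanti1 hanti2 hbianchi htrfree B hB htrB
end

section
/- Let n ≥ 3 and let R be a 4-tensor on ℝⁿ with curvature symmetries and satisfying the first Bianchi identity. Let B be the matrix B_{jl} = Σ_i R_{ijil}, and assume tr B = 0. Then ‖B‖² ≤ ((n−2)/4) · ‖R‖². -/
lemma stmt7_quad_expand {ι : Type*} [Fintype ι] (F G : ι → ι → ι → ι → ℝ) (c : ℝ) :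
    ∑ i, ∑ j, ∑ k, ∑ l, (F i j k l - c * G i j k l)^2
      = (∑ i, ∑ j, ∑ k, ∑ l, (F i j k l)^2)
        - 2*c*(∑ i, ∑ j, ∑ k, ∑ l, F i j k l * G i j k l)
        + c^2*(∑ i, ∑ j, ∑ k, ∑ l, (G i j k l)^2) := by
  have h : ∀ i j k l, (F i j k l - c * G i j k l)^2
      = (F i j k l)^2 - 2*c*(F i j k l * G i j k l) + c^2*(G i j k l)^2 := by intros; ring
  simp only [h, Finset.sum_add_distrib, Finset.sum_sub_distrib, ← Finset.mul_sum]

/-- The inequality `‖B‖² ≤ ((n−2)/4) ‖R‖²` for an algebraic curvature tensor `R`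
with trace-free Ricci contraction `B`. -/
theorem stmt_7 (n : ℕ) (hn : 3 ≤ n)
    (R : Fin n → Fin n → Fin n → Fin n → ℝ)
    (hanti1 : ∀ i j k l, R i j k l = -R j i k l)
    (hanti2 : ∀ i j k l, R i j k l = -R i j l k)
    (hpair : ∀ i j k l, R i j k l = R k l i j)
    (hbianchi : ∀ i j k l, R i j k l + R i k l j + R i l j k = 0)
    (B : Matrix (Fin n) (Fin n) ℝ)
    (hBdef : ∀ j l, B j l = ∑ i, R i j i l)
    (htrB : B.trace = 0) :
    (∑ i, ∑ j, (B i j) ^ 2) ≤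
      ((n : ℝ) - 2) / 4 * ∑ i, ∑ j, ∑ k, ∑ l, (R i j k l) ^ 2 := by
  have hc : (0:ℝ) < (n:ℝ) - 2 := by
    have h3 : (3:ℝ) ≤ (n:ℝ) := by exact_mod_cast hn
    linarith
  set c : ℝ := 1 / ((n:ℝ) - 2) with hcdef
  set S : Fin n → Fin n → Fin n → Fin n → ℝ := fun i j k l =>
    (if j = l then B i k else 0) + (if i = k then B j l else 0)
      - (if j = k then B i l else 0) - (if i = l then B j k else 0) with hS
  set bsq : ℝ := ∑ i, ∑ j, B i j * B i j with hbsq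
  set Rsq : ℝ := ∑ i, ∑ j, ∑ k, ∑ l, (R i j k l)^2 with hRsq
  have htr : (∑ i, B i i) = 0 := htrB
  -- contraction identities
  have hB1 : ∀ i k, (∑ j, R i j k j) = B i k := by
    intro i k
    rw [hBdef]
    refine Finset.sum_congr rfl fun j _ => ?_
    have h1 := hanti1 i j k j
    have h2 := hanti2 j i k j
    linarith
  have hB2 : ∀ j l, (∑ i, R i j i l) = B j l := fun j l => (hBdef j l).symm
  have hB3 : ∀ i l, (∑ j, R i j j l) = -B i l := by
    intro i l
    rw [hBdef, ← Finset.sum_neg_distrib]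
    exact Finset.sum_congr rfl fun j _ => hanti1 i j j l
  have hB4 : ∀ j k, (∑ i, R i j k i) = -B j k := by
    intro j k
    rw [hBdef, ← Finset.sum_neg_distrib]
    exact Finset.sum_congr rfl fun i _ => hanti2 i j k i
  have cyc : ∀ (f : Fin n → Fin n → Fin n → ℝ),
      (∑ i, ∑ j, ∑ k, f i j k) = ∑ j, ∑ k, ∑ i, f i j k := fun f =>
    Finset.sum_comm.trans (Finset.sum_congr rfl fun _ _ => Finset.sum_comm)
  -- ⟨R, S⟩ = 4 bsq
  have hRS : (∑ i, ∑ j, ∑ k, ∑ l, R i j k l * S i j k l) = 4 * bsq := by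
    simp only [hS, mul_add, mul_sub, mul_ite, mul_zero,
      Finset.sum_add_distrib, Finset.sum_sub_distrib,
      Finset.sum_ite_eq, Finset.sum_ite_eq', Finset.sum_ite_irrel,
      Finset.sum_const_zero, Finset.mem_univ, if_true]
    have e1 : (∑ i, ∑ j, ∑ k, R i j k j * B i k) = bsq := by
      calc (∑ i, ∑ j, ∑ k, R i j k j * B i k)
          = ∑ i, ∑ k, ∑ j, R i j k j * B i k :=
            Finset.sum_congr rfl fun _ _ => Finset.sum_comm
        _ = ∑ i, ∑ k, (∑ j, R i j k j) * B i k := by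
            simp only [Finset.sum_mul]
        _ = bsq := by
            rw [hbsq]
            exact Finset.sum_congr rfl fun i _ => Finset.sum_congr rfl fun k _ => by
              rw [hB1]
    have e2 : (∑ i, ∑ j, ∑ l, R i j i l * B j l) = bsq := by
      calc (∑ i, ∑ j, ∑ l, R i j i l * B j l)
          = ∑ j, ∑ l, ∑ i, R i j i l * B j l := cyc _
        _ = ∑ j, ∑ l, (∑ i, R i j i l) * B j l := by
            simp only [Finset.sum_mul]
        _ = bsq := by
            rw [hbsq]
            exact Finset.sum_congr rfl fun j _ => Finset.sum_congr rfl fun l _ => by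
              rw [hB2]
    have e3 : (∑ i, ∑ j, ∑ l, R i j j l * B i l) = -bsq := by
      calc (∑ i, ∑ j, ∑ l, R i j j l * B i l)
          = ∑ i, ∑ l, ∑ j, R i j j l * B i l :=
            Finset.sum_congr rfl fun _ _ => Finset.sum_comm
        _ = ∑ i, ∑ l, (∑ j, R i j j l) * B i l := by
            simp only [Finset.sum_mul]
        _ = -bsq := by
            rw [hbsq, ← Finset.sum_neg_distrib]
            refine Finset.sum_congr rfl fun i _ => ?_
            rw [← Finset.sum_neg_distrib]
            exact Finset.sum_congr rfl fun l _ => by rw [hB3]; ring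
    have e4 : (∑ i, ∑ j, ∑ k, R i j k i * B j k) = -bsq := by
      calc (∑ i, ∑ j, ∑ k, R i j k i * B j k)
          = ∑ j, ∑ k, ∑ i, R i j k i * B j k := cyc _
        _ = ∑ j, ∑ k, (∑ i, R i j k i) * B j k := by
            simp only [Finset.sum_mul]
        _ = -bsq := by
            rw [hbsq, ← Finset.sum_neg_distrib]
            refine Finset.sum_congr rfl fun j _ => ?_
            rw [← Finset.sum_neg_distrib]
            exact Finset.sum_congr rfl fun k _ => by rw [hB4]; ring
    rw [e1, e2, e3, e4]; ring
  -- ‖S‖² = (4n − 8) bsq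
  have hSS : (∑ i, ∑ j, ∑ k, ∑ l, (S i j k l)^2) = (4*(n:ℝ) - 8) * bsq := by
    simp only [hS, sq, mul_add, mul_sub, add_mul, sub_mul, mul_ite, ite_mul, mul_zero, zero_mul,
      Finset.sum_add_distrib, Finset.sum_sub_distrib,
      Finset.sum_ite_eq, Finset.sum_ite_eq', Finset.sum_ite_irrel,
      Finset.sum_const_zero, Finset.mem_univ, if_true, Finset.sum_const, Finset.card_univ,
      Fintype.card_fin, smul_eq_mul, nsmul_eq_mul]
    have hswap : (∑ x : Fin n, ∑ y : Fin n, B y x * B y x) = bsq := Finset.sum_comm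
    have hz1 : (∑ x : Fin n, ∑ y : Fin n, B x x * B y y) = 0 := by
      simp only [← Finset.mul_sum, htr, mul_zero, Finset.sum_const_zero]
    have hz2 : (∑ x : Fin n, ∑ y : Fin n, B y y * B x x) = 0 := by
      simp only [← Finset.sum_mul, htr, zero_mul, Finset.sum_const_zero]
    simp only [← Finset.mul_sum, hswap, hz1, hz2, htr, mul_zero, Finset.sum_const_zero, ← hbsq]
    ring
  -- expand ‖R − c S‖² ≥ 0
  have h0 : (0:ℝ) ≤ ∑ i, ∑ j, ∑ k, ∑ l, (R i j k l - c * S i j k l)^2 :=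
    Finset.sum_nonneg fun i _ => Finset.sum_nonneg fun j _ =>
      Finset.sum_nonneg fun k _ => Finset.sum_nonneg fun l _ => sq_nonneg _
  rw [stmt7_quad_expand, hRS, hSS, ← hRsq] at h0
  have hval : Rsq - 2*c*(4*bsq) + c^2*((4*(n:ℝ) - 8) * bsq) = Rsq - 4/((n:ℝ)-2) * bsq := by
    rw [hcdef]
    field_simp
    ring
  rw [hval] at h0
  have h4 : ((n:ℝ)-2) * (4/((n:ℝ)-2)) = 4 := by field_simp
  have hmul := mul_nonneg hc.le h0
  have hgoal : (∑ i, ∑ j, (B i j) ^ 2) = bsq := by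
    rw [hbsq]
    exact Finset.sum_congr rfl fun i _ => Finset.sum_congr rfl fun j _ => sq (B i j) ▸ by ring
  rw [hgoal, div_mul_eq_mul_div, le_div_iff₀ (by norm_num : (0:ℝ) < 4)]
  have hexp2 : ((n:ℝ)-2) * (4/((n:ℝ)-2) * bsq) = 4 * bsq := by
    rw [← mul_assoc, h4]
  rw [mul_sub, hexp2] at hmul
  linarith
end

section
/- Let n ≥ 3 and let R be a 4-tensor on ℝⁿ with curvature symmetries, satisfying the first Bianchi identity, and with vanishing double trace Σ_{i,j} R_{ijij} = 0. Then 2·|Σ_{i,j,k,l,h,m} R_{ijlk} R_{jhkm} R_{himl}| + (1/2)·|Σ_{i,j,k,l,h,m} R_{ijlk} R_{hmij} R_{lkhm}| ≤ [2(n²+n−4)/√((n−1)n(n+1)(n+2)) + (n²−n−4)/(2√((n−2)(n−1)n(n+1)))] · ‖R‖³. -/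
/-!
Both sums are traces of cubes of symmetric operators on `ℝⁿ ⊗ ℝⁿ`: the first is `tr M³` for
`M_{(i,l),(j,k)} = R_{ijlk}`, the second is `tr A³` for the curvature operator
`A_{(i,j),(l,k)} = R_{ijlk}`, and `‖R‖² = tr M² = tr A²`. The pair symmetry makes `M` commute
with the flip of `ℝⁿ ⊗ ℝⁿ`, so `M` splits into trace-free pieces on `S²ℝⁿ` and `Λ²ℝⁿ` with
`M₊ M₋ = 0`, while `A` lives on `Λ²ℝⁿ`. Each piece obeys Okumura's inequality
`|tr B³| ≤ (d - 2) / √(d (d - 1)) · (tr B²)^{3/2}` for trace-free symmetric `B` of rank `≤ d`: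
on eigenvalues this says that a vector with zero sum and at most `d` nonzero entries has
`∑ λᵢ³ ≥ -(d - 2) / √(d (d - 1)) · |λ|³`, which follows from
`∑ (λᵢ + (d - 1) t) (λᵢ - t)² ≥ 0` for `t = |λ| / √(d (d - 1))`.
-/

open Finset Matrix

noncomputable def okumuraConst (d : ℝ) : ℝ := (d - 2) / √(d * (d - 1))

lemma okumuraConst_nonneg {d : ℝ} (hd : 2 ≤ d) : 0 ≤ okumuraConst d :=
  div_nonneg (by linarith) (Real.sqrt_nonneg _)

lemma okumuraConst_mul_sub_one_div_two (x : ℝ) :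
    okumuraConst (x * (x - 1) / 2) = (x ^ 2 - x - 4) / √((x - 2) * (x - 1) * x * (x + 1)) := by
  have h : x * (x - 1) / 2 * (x * (x - 1) / 2 - 1) = (x - 2) * (x - 1) * x * (x + 1) / 2 ^ 2 := by
    ring
  rw [okumuraConst, h, Real.sqrt_div' _ (by positivity), Real.sqrt_sq zero_le_two,
    div_div_eq_mul_div]
  ring

lemma Real.sqrt_pow_three_add_le {a b : ℝ} (ha : 0 ≤ a) (hb : 0 ≤ b) :
    √a ^ 3 + √b ^ 3 ≤ √(a + b) ^ 3 := by
  have hcube : ∀ x, 0 ≤ x → √x ^ 3 = x * √x := fun x hx => by rw [pow_succ, Real.sq_sqrt hx]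
  rw [hcube a ha, hcube b hb, hcube _ (add_nonneg ha hb), add_mul]
  gcongr <;> linarith

theorem Fintype.sum_eq_zero_of_swap_eq_neg {ι M : Type*} [Fintype ι] [AddCommGroup M]
    [IsAddTorsionFree M] (f : ι × ι → M) (hf : ∀ q, f q.swap = -f q) : ∑ q, f q = 0 := by
  have h := (Equiv.prodComm ι ι).sum_comp f
  simp only [Equiv.prodComm_apply, hf, sum_neg_distrib] at h
  exact neg_eq_self.mp h

namespace Finset

variable {ι : Type*} {s : Finset ι} {f : ι → ℝ}

lemma mul_sq_le_of_sum_eq_zero (hf : ∑ i ∈ s, f i = 0) {d : ℕ} (hs : #s ≤ d) {i : ι}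
    (hi : i ∈ s) : d * f i ^ 2 ≤ (d - 1) * ∑ j ∈ s, f j ^ 2 := by
  classical
  have hsum : ∑ j ∈ s.erase i, f j = -f i := by linarith [add_sum_erase s f hi]
  have hsq : ∑ j ∈ s.erase i, f j ^ 2 = ∑ j ∈ s, f j ^ 2 - f i ^ 2 := by
    linarith [add_sum_erase s (f · ^ 2) hi]
  have hcard : (#(s.erase i) : ℝ) ≤ d - 1 := by
    rw [card_erase_of_mem hi, Nat.cast_sub (card_pos.mpr ⟨i, hi⟩)]
    push_cast
    linarith [(Nat.cast_le (α := ℝ)).mpr hs]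
  have hnonneg : 0 ≤ ∑ j ∈ s.erase i, f j ^ 2 := sum_nonneg fun _ _ => sq_nonneg _
  have hcs := sq_sum_le_card_mul_sum_sq (s := s.erase i) (f := f)
  rw [hsum, neg_sq, hsq] at hcs
  nlinarith [mul_le_mul_of_nonneg_right hcard hnonneg]

theorem neg_okumuraConst_mul_le_sum_pow_three (hf : ∑ i ∈ s, f i = 0) {d : ℕ} (hd : 2 ≤ d)
    (hs : #s ≤ d) : -(okumuraConst d * √(∑ i ∈ s, f i ^ 2) ^ 3) ≤ ∑ i ∈ s, f i ^ 3 := by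
  set q := ∑ i ∈ s, f i ^ 2
  have hd' : (2 : ℝ) ≤ d := by exact_mod_cast hd
  have hD : 0 < (d : ℝ) * (d - 1) := by nlinarith
  have hq : 0 ≤ q := sum_nonneg fun _ _ => sq_nonneg _
  -- the extremal vector is `(t, …, t, -(d - 1) t)`
  set t := √(q / (d * (d - 1)))
  have ht : 0 ≤ t := Real.sqrt_nonneg _
  have ht2 : t ^ 2 * (d * (d - 1)) = q := by
    rw [Real.sq_sqrt (div_nonneg hq hD.le), div_mul_cancel₀ _ hD.ne']
  have hlow : ∀ i ∈ s, 0 ≤ f i + (d - 1) * t := by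
    intro i hi
    have h := mul_sq_le_of_sum_eq_zero hf hs hi
    have : f i ^ 2 ≤ ((d - 1) * t) ^ 2 := by nlinarith
    linarith [(abs_le_of_sq_le_sq' this (by nlinarith)).1]
  have hexpand : ∑ i ∈ s, (f i + (d - 1) * t) * (f i - t) ^ 2 =
      ∑ i ∈ s, f i ^ 3 + (d - 3) * t * q + #s * (d - 1) * t ^ 3 := by
    have : ∀ i, (f i + (d - 1) * t) * (f i - t) ^ 2 =
        f i ^ 3 + (d - 3) * t * f i ^ 2 - (2 * d - 3) * t ^ 2 * f i + (d - 1) * t ^ 3 := by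
      intro i; ring
    simp only [this, sum_add_distrib, sum_sub_distrib, ← mul_sum, hf, sum_const, nsmul_eq_mul]
    ring
  have hpos : 0 ≤ ∑ i ∈ s, (f i + (d - 1) * t) * (f i - t) ^ 2 :=
    sum_nonneg fun i hi => mul_nonneg (hlow i hi) (sq_nonneg _)
  have hcard : (#s : ℝ) * (d - 1) * t ^ 3 ≤ t * q := by
    rw [← ht2]
    have : (#s : ℝ) ≤ d := by exact_mod_cast hs
    nlinarith [mul_nonneg (mul_nonneg (sub_nonneg.2 this) (by linarith : (0 : ℝ) ≤ d - 1))
      (pow_nonneg ht 3)]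
  have hconst : okumuraConst d * √q ^ 3 = (d - 2) * (t * q) := by
    have htq : t = √q / √(d * (d - 1)) := Real.sqrt_div hq _
    rw [okumuraConst, htq]
    linear_combination (d - 2) / √(d * (d - 1)) * √q * Real.sq_sqrt hq
  rw [hconst]
  linarith

theorem abs_sum_pow_three_le_okumuraConst_mul (hf : ∑ i ∈ s, f i = 0) {d : ℕ} (hd : 2 ≤ d)
    (hs : #s ≤ d) : |∑ i ∈ s, f i ^ 3| ≤ okumuraConst d * √(∑ i ∈ s, f i ^ 2) ^ 3 := by
  have hneg := neg_okumuraConst_mul_le_sum_pow_three (f := (-f ·)) (by simp [hf]) hd hs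
  simp only [neg_sq, Odd.neg_pow (by decide : Odd 3), sum_neg_distrib] at hneg
  exact abs_le.mpr ⟨neg_okumuraConst_mul_le_sum_pow_three hf hd hs, by linarith⟩

end Finset

namespace Matrix

theorem rank_le_card_of_col_mem_span {K m n κ : Type*} [Field K] [Fintype n] [Fintype κ]
    (A : Matrix m n K) (v : κ → m → K)
    (h : ∀ j, (fun i => A i j) ∈ Submodule.span K (Set.range v)) :
    A.rank ≤ Fintype.card κ := by
  have := FiniteDimensional.span_of_finite K (Set.finite_range v)
  rw [rank_eq_finrank_span_cols]
  exact (Submodule.finrank_mono (Submodule.span_le.2 (Set.range_subset_iff.2 h))).trans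
    (finrank_range_le_card v)

theorem rank_le_card_sym2_of_col_swap {K m ι : Type*} [Field K] [Fintype ι]
    (A : Matrix m (ι × ι) K) (hA : ∀ i q, A i q.swap = A i q) :
    A.rank ≤ Fintype.card (Sym2 ι) := by
  classical
  refine rank_le_card_of_col_mem_span A
    (fun s i => Sym2.lift ⟨fun a b => A i (a, b), fun a b => (hA i (a, b)).symm⟩ s) fun q => ?_
  exact Submodule.subset_span ⟨s(q.1, q.2), rfl⟩

theorem rank_le_choose_two_of_col_swap_neg {K m ι : Type*} [Field K] [CharZero K] [Fintype ι]
    (A : Matrix m (ι × ι) K) (hA : ∀ i q, A i q.swap = -A i q) :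
    A.rank ≤ (Fintype.card ι).choose 2 := by
  classical
  rw [← Sym2.card_subtype_not_diag]
  refine rank_le_card_of_col_mem_span A (fun s i => A i s.1.out) fun q => ?_
  by_cases hq : q.1 = q.2
  · have hzero : (fun i => A i q) = 0 := funext fun i => by
      have h := hA i q
      rw [show q.swap = q from Prod.ext hq.symm hq] at h
      simpa using self_eq_neg.mp h
    exact hzero ▸ Submodule.zero_mem _
  · have hmem : (fun i => A i (s(q.1, q.2) : Sym2 ι).out) ∈
        Submodule.span K (Set.range fun (s : {s : Sym2 ι // ¬s.IsDiag}) i => A i s.1.out) :=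
      Submodule.subset_span ⟨⟨s(q.1, q.2), by simpa using hq⟩, rfl⟩
    have hout : (s(q.1, q.2) : Sym2 ι).out = q ∨ (s(q.1, q.2) : Sym2 ι).out = q.swap :=
      Sym2.mk_eq_mk_iff.mp (Quot.out_eq _)
    rcases hout with h | h
    · rwa [h] at hmem
    · convert Submodule.neg_mem _ hmem using 1
      ext i
      simp [h, hA]

section

variable {ι : Type*} [Fintype ι] [DecidableEq ι]

theorem trace_pow_three {R : Type*} [CommSemiring R] (X : Matrix ι ι R) :
    (X ^ 3).trace = ∑ p, ∑ q, ∑ r, X p q * X q r * X r p := by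
  simp only [pow_succ, pow_zero, one_mul, trace, diag, mul_apply, sum_mul]
  exact sum_congr rfl fun p _ => sum_comm

theorem trace_sq_of_symm {R : Type*} [CommSemiring R] {X : Matrix ι ι R}
    (hX : ∀ p q, X q p = X p q) : (X ^ 2).trace = ∑ p, ∑ q, X p q ^ 2 := by
  simp only [sq, trace, diag, mul_apply, hX]

namespace IsHermitian

theorem trace_pow {𝕜 : Type*} [RCLike 𝕜] {A : Matrix ι ι 𝕜} (hA : A.IsHermitian) (k : ℕ) :
    (A ^ k).trace = ∑ i, (hA.eigenvalues i : 𝕜) ^ k := by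
  conv_lhs => rw [hA.spectral_theorem, ← map_pow, Unitary.conjStarAlgAut_apply, trace_mul_cycle,
    Unitary.coe_star_mul_self, one_mul, diagonal_pow, trace_diagonal]
  simp

variable {A : Matrix ι ι ℝ}

lemma trace_sq_nonneg (hA : A.IsHermitian) : 0 ≤ (A ^ 2).trace := by
  rw [hA.trace_pow]
  exact sum_nonneg fun _ _ => sq_nonneg _

theorem abs_trace_pow_three_le (hA : A.IsHermitian) (htr : A.trace = 0) {d : ℕ} (hd : 2 ≤ d)
    (hrank : A.rank ≤ d) : |(A ^ 3).trace| ≤ okumuraConst d * √((A ^ 2).trace) ^ 3 := by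
  set s := univ.filter (hA.eigenvalues · ≠ 0)
  have hsum : ∀ k ≠ 0, (A ^ k).trace = ∑ i ∈ s, hA.eigenvalues i ^ k := fun k hk => by
    rw [hA.trace_pow, sum_filter_of_ne fun i _ hi => by simpa [hk] using hi]
    rfl
  have hs : #s ≤ d := by rwa [hA.rank_eq_card_non_zero_eigs, Fintype.card_subtype] at hrank
  rw [hsum 3 (by norm_num), hsum 2 (by norm_num)]
  refine abs_sum_pow_three_le_okumuraConst_mul ?_ hd hs
  simpa [htr] using (hsum 1 one_ne_zero).symm

theorem abs_trace_add_pow_three_le {B : Matrix ι ι ℝ} (hA : A.IsHermitian) (hB : B.IsHermitian)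
    (hAB : A * B = 0) (hAtr : A.trace = 0) (hBtr : B.trace = 0) {d : ℕ} (hd : 2 ≤ d)
    (hArank : A.rank ≤ d) (hBrank : B.rank ≤ d) :
    |((A + B) ^ 3).trace| ≤ okumuraConst d * √(((A + B) ^ 2).trace) ^ 3 := by
  have hBA : B * A = 0 := by
    rw [← hA.eq, ← hB.eq, ← conjTranspose_mul, hAB, conjTranspose_zero]
  have hsq : (A + B) ^ 2 = A ^ 2 + B ^ 2 := by simp [sq, add_mul, mul_add, hAB, hBA]
  have hcube : (A + B) ^ 3 = A ^ 3 + B ^ 3 := by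
    simp [pow_succ, hsq, add_mul, mul_add, mul_assoc, hAB, hBA]
  rw [hsq, hcube, trace_add, trace_add]
  calc |(A ^ 3).trace + (B ^ 3).trace|
      ≤ okumuraConst d * √((A ^ 2).trace) ^ 3 + okumuraConst d * √((B ^ 2).trace) ^ 3 :=
        (abs_add_le _ _).trans (add_le_add (hA.abs_trace_pow_three_le hAtr hd hArank)
          (hB.abs_trace_pow_three_le hBtr hd hBrank))
    _ ≤ okumuraConst d * √((A ^ 2).trace + (B ^ 2).trace) ^ 3 := by
        rw [← mul_add]
        exact mul_le_mul_of_nonneg_left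
          (Real.sqrt_pow_three_add_le hA.trace_sq_nonneg hB.trace_sq_nonneg)
          (okumuraConst_nonneg (by exact_mod_cast hd))

theorem abs_trace_pow_three_le_of_swap {X : Matrix (ι × ι) (ι × ι) ℝ} (hX : X.IsHermitian)
    (hswap : ∀ p q, X p.swap q.swap = X p q) (htr : X.trace = 0)
    (htr_swap : ∑ p, X p p.swap = 0) (hι : 2 ≤ Fintype.card ι) :
    |(X ^ 3).trace| ≤ okumuraConst (Fintype.card (Sym2 ι)) * √((X ^ 2).trace) ^ 3 := by
  have hsymm : ∀ p q, X q p = X p q := fun p q => by simpa using hX.apply p q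
  have hcol : ∀ p q, X p.swap q = X p q.swap := fun p q => by simpa using hswap p q.swap
  -- the components of `X` on `S²` and on `Λ²`
  set P : Matrix (ι × ι) (ι × ι) ℝ := of fun p q => (X p q + X p q.swap) / 2
  set N : Matrix (ι × ι) (ι × ι) ℝ := of fun p q => (X p q - X p q.swap) / 2
  have hXPN : X = P + N := by ext; simp only [P, N, add_apply, of_apply]; ring
  have hP : P.IsHermitian := IsHermitian.ext fun p q => by
    simp only [P, of_apply, star_trivial]
    rw [hsymm p q, hsymm p.swap q, hcol]
  have hN : N.IsHermitian := IsHermitian.ext fun p q => by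
    simp only [N, of_apply, star_trivial]
    rw [hsymm p q, hsymm p.swap q, hcol]
  have hPN : P * N = 0 := by
    ext p r
    refine Fintype.sum_eq_zero_of_swap_eq_neg _ fun q => ?_
    simp only [P, N, of_apply, hcol, Prod.swap_swap]
    ring
  have hPtr : P.trace = (X.trace + ∑ p, X p p.swap) / 2 := by
    simp only [trace, diag, P, of_apply, ← sum_div, sum_add_distrib]
  have hNtr : N.trace = (X.trace - ∑ p, X p p.swap) / 2 := by
    simp only [trace, diag, N, of_apply, ← sum_div, sum_sub_distrib]
  have hcard : (Fintype.card ι).choose 2 ≤ Fintype.card (Sym2 ι) := by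
    rw [Sym2.card]
    exact Nat.choose_le_choose 2 (Nat.le_succ _)
  rw [hXPN]
  refine abs_trace_add_pow_three_le hP hN hPN (by simp [hPtr, htr, htr_swap])
    (by simp [hNtr, htr, htr_swap]) ?_ ?_ ?_
  · rw [Sym2.card]
    exact (by decide : 2 ≤ Nat.choose 3 2).trans (Nat.choose_le_choose 2 (by omega))
  · exact rank_le_card_sym2_of_col_swap P fun p q => by
      simp only [P, of_apply, Prod.swap_swap, add_comm]
  · exact (rank_le_choose_two_of_col_swap_neg N fun p q => by
      simp only [N, of_apply, Prod.swap_swap]; ring).trans hcard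

end IsHermitian

end

end Matrix

section CurvatureTensor

variable {ι : Type*} (R : ι → ι → ι → ι → ℝ)

def pairMatrix : Matrix (ι × ι) (ι × ι) ℝ := of fun p q => R p.1 q.1 p.2 q.2

def curvatureOperator : Matrix (ι × ι) (ι × ι) ℝ := of fun p q => R p.1 p.2 q.1 q.2

variable [Fintype ι] [DecidableEq ι]

theorem trace_pairMatrix_pow_three : (pairMatrix R ^ 3).trace =
    ∑ i, ∑ j, ∑ k, ∑ l, ∑ h, ∑ m, R i j l k * R j h k m * R h i m l := by
  simp only [trace_pow_three, Fintype.sum_prod_type, pairMatrix, of_apply]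
  exact sum_congr rfl fun i _ => sum_comm.trans (sum_congr rfl fun j _ => sum_comm)

theorem trace_curvatureOperator_pow_three : (curvatureOperator R ^ 3).trace =
    ∑ i, ∑ j, ∑ k, ∑ l, ∑ h, ∑ m, R i j l k * R h m i j * R l k h m := by
  simp only [trace_pow_three, Fintype.sum_prod_type, curvatureOperator, of_apply]
  refine sum_congr rfl fun i _ => sum_congr rfl fun j _ => ?_
  rw [sum_comm]
  ac_rfl

variable {R}

theorem abs_trace_pairMatrix_pow_three_le (hanti1 : ∀ i j k l, R i j k l = -R j i k l)
    (hanti2 : ∀ i j k l, R i j k l = -R i j l k) (hpair : ∀ i j k l, R i j k l = R k l i j)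
    (htr2 : ∑ i, ∑ j, R i j i j = 0) (hι : 2 ≤ Fintype.card ι) :
    |(pairMatrix R ^ 3).trace| ≤
      okumuraConst (Fintype.card (Sym2 ι)) * √(∑ i, ∑ j, ∑ k, ∑ l, R i j k l ^ 2) ^ 3 := by
  have hsymm : ∀ p q, pairMatrix R q p = pairMatrix R p q := fun p q => by
    simp only [pairMatrix, of_apply]
    rw [hanti1, hanti2, neg_neg]
  have hsq : (pairMatrix R ^ 2).trace = ∑ i, ∑ j, ∑ k, ∑ l, R i j k l ^ 2 := by
    rw [trace_sq_of_symm hsymm]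
    simp only [Fintype.sum_prod_type, pairMatrix, of_apply]
    exact sum_congr rfl fun i _ => sum_comm
  have htr : (pairMatrix R).trace = 0 := by
    simp only [trace, Matrix.diag, Fintype.sum_prod_type, pairMatrix, of_apply]
    exact sum_eq_zero fun i _ => sum_eq_zero fun l _ => by linarith [hanti1 i i l l]
  have htr_swap : ∑ p, pairMatrix R p p.swap = -∑ i, ∑ j, R i j i j := by
    simp only [Fintype.sum_prod_type, pairMatrix, of_apply, Prod.fst_swap, Prod.snd_swap,
      ← sum_neg_distrib]
    exact sum_congr rfl fun i _ => sum_congr rfl fun j _ => hanti2 i j j i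
  rw [← hsq]
  exact (IsHermitian.ext fun p q => by simpa using hsymm p q).abs_trace_pow_three_le_of_swap
    (fun p q => hpair _ _ _ _) htr (by rw [htr_swap, htr2, neg_zero]) hι

theorem abs_trace_curvatureOperator_pow_three_le (hanti2 : ∀ i j k l, R i j k l = -R i j l k)
    (hpair : ∀ i j k l, R i j k l = R k l i j) (htr2 : ∑ i, ∑ j, R i j i j = 0)
    (hι : 3 ≤ Fintype.card ι) :
    |(curvatureOperator R ^ 3).trace| ≤
      okumuraConst ((Fintype.card ι).choose 2) * √(∑ i, ∑ j, ∑ k, ∑ l, R i j k l ^ 2) ^ 3 := by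
  have hsymm : ∀ p q, curvatureOperator R q p = curvatureOperator R p q :=
    fun p q => (hpair _ _ _ _).symm
  have hsq : (curvatureOperator R ^ 2).trace = ∑ i, ∑ j, ∑ k, ∑ l, R i j k l ^ 2 := by
    rw [trace_sq_of_symm hsymm]
    simp only [Fintype.sum_prod_type, curvatureOperator, of_apply]
  rw [← hsq]
  exact (IsHermitian.ext fun p q => by simpa using hsymm p q).abs_trace_pow_three_le
    (by simpa [trace, Fintype.sum_prod_type, curvatureOperator] using htr2)
    ((by decide : 2 ≤ Nat.choose 3 2).trans (Nat.choose_le_choose 2 hι))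
    (rank_le_choose_two_of_col_swap_neg _ fun p q => hanti2 _ _ _ _)

end CurvatureTensor

theorem stmt_9_general (n : ℕ) (hn : 3 ≤ n)
    (R : Fin n → Fin n → Fin n → Fin n → ℝ)
    (hanti1 : ∀ i j k l, R i j k l = -R j i k l)
    (hanti2 : ∀ i j k l, R i j k l = -R i j l k)
    (hpair : ∀ i j k l, R i j k l = R k l i j)
    (htr2 : ∑ i, ∑ j, R i j i j = 0) :
    2 * |∑ i, ∑ j, ∑ k, ∑ l, ∑ h, ∑ m, R i j l k * R j h k m * R h i m l| +
      (1 / 2) * |∑ i, ∑ j, ∑ k, ∑ l, ∑ h, ∑ m, R i j l k * R h m i j * R l k h m| ≤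
      (2 * ((n : ℝ) ^ 2 + n - 4) /
          Real.sqrt (((n : ℝ) - 1) * n * ((n : ℝ) + 1) * ((n : ℝ) + 2)) +
        ((n : ℝ) ^ 2 - n - 4) /
          (2 * Real.sqrt (((n : ℝ) - 2) * ((n : ℝ) - 1) * n * ((n : ℝ) + 1)))) *
        (Real.sqrt (∑ i, ∑ j, ∑ k, ∑ l, (R i j k l) ^ 2)) ^ 3 := by
  have hS := abs_trace_pairMatrix_pow_three_le hanti1 hanti2 hpair htr2
    (by simpa using (by omega : 2 ≤ n))
  have hL := abs_trace_curvatureOperator_pow_three_le hanti2 hpair htr2 (by simpa using hn)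
  rw [trace_pairMatrix_pow_three, Sym2.card, Fintype.card_fin, Nat.cast_choose_two,
    okumuraConst_mul_sub_one_div_two] at hS
  rw [trace_curvatureOperator_pow_three, Fintype.card_fin, Nat.cast_choose_two,
    okumuraConst_mul_sub_one_div_two] at hL
  push_cast at hS
  ring_nf at hS hL ⊢
  linarith

/-- Estimate (2.13) of the paper, for an algebraic curvature tensor `R`
with vanishing double trace. -/
theorem stmt_9 (n : ℕ) (hn : 3 ≤ n)
    (R : Fin n → Fin n → Fin n → Fin n → ℝ)
    (hanti1 : ∀ i j k l, R i j k l = -R j i k l)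
    (hanti2 : ∀ i j k l, R i j k l = -R i j l k)
    (hpair : ∀ i j k l, R i j k l = R k l i j)
    (hbianchi : ∀ i j k l, R i j k l + R i k l j + R i l j k = 0)
    (htr2 : ∑ i, ∑ j, R i j i j = 0) :
    2 * |∑ i, ∑ j, ∑ k, ∑ l, ∑ h, ∑ m, R i j l k * R j h k m * R h i m l| +
      (1 / 2) * |∑ i, ∑ j, ∑ k, ∑ l, ∑ h, ∑ m, R i j l k * R h m i j * R l k h m| ≤
      (2 * ((n : ℝ) ^ 2 + n - 4) /
          Real.sqrt (((n : ℝ) - 1) * n * ((n : ℝ) + 1) * ((n : ℝ) + 2)) +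
        ((n : ℝ) ^ 2 - n - 4) /
          (2 * Real.sqrt (((n : ℝ) - 2) * ((n : ℝ) - 1) * n * ((n : ℝ) + 1)))) *
        (Real.sqrt (∑ i, ∑ j, ∑ k, ∑ l, (R i j k l) ^ 2)) ^ 3 :=
  stmt_9_general n hn R hanti1 hanti2 hpair htr2
end
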